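/- arXiv:math/0701105 — 2 statements merged into one kernel-verified Lean document; each statement's English description precedes it below -/
import Mathlib

section
/- Assume the abc conjecture over ℚ: for every ε > 0 there exists C > 0 such that for all coprime integers a, b, c with a + b + c = 0, max(|a|,|b|,|c|) ≤ C · (∏_{p | abc} p)^{1+ε}. Let n₀, n₁, n_∞ be positive integers with 1/n₀ + 1/n₁ + 1/n_∞ < 1. Then there are only finitely many pairs of coprime integers (a, c) such that (with b = c − a) every prime dividing a divides it to order ≥ n₀, every prime dividing b divides it to order ≥ n₁, and every prime dividing c divides it to order ≥ n_∞. -/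
/-!
If every prime dividing `x` divides it to order at least `n`, then `rad(x) ^ n ∣ x`, so
`rad(x) ≤ |x| ^ (1 / n)`. For the triple `(a, c - a, -c)` with largest absolute value `M` this
gives `rad(a (c - a) c) ≤ M ^ s` with `s = 1/n₀ + 1/n₁ + 1/n∞ < 1`. Applying abc with `ε` so small
that `(1 + ε) s < 1` yields `M ≤ C M ^ ((1 + ε) s)`, which bounds `M` independently of `(a, c)`.
-/

open UniqueFactorizationMonoid

namespace Int

theorem gcd_gcd_eq_one_of_gcd_eq_one {a b c : ℤ} (h : Int.gcd a c = 1) :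
    Int.gcd (Int.gcd a b) c = 1 := by
  have hdvd : ((Int.gcd (Int.gcd a b) c : ℕ) : ℤ) ∣ Int.gcd a c :=
    Int.dvd_coe_gcd ((Int.gcd_dvd_left _ _).trans (Int.gcd_dvd_left _ _)) (Int.gcd_dvd_right _ _)
  rw [h] at hdvd
  exact_mod_cast Int.eq_one_of_dvd_one (by positivity) hdvd

theorem radical_pow_dvd_of_forall_prime_pow_dvd {z : ℤ} {n : ℕ}
    (h : ∀ p : ℕ, p.Prime → (p : ℤ) ∣ z → (p : ℤ) ^ n ∣ z) : radical z ^ n ∣ z := by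
  rw [radical_eq_prod_primeFactors, Nat.cast_prod, ← Finset.prod_pow]
  refine Finset.prod_dvd_of_coprime (fun p hp q hq hpq => ?_) fun p hp => ?_
  · have hpq : p.Coprime q :=
      (Nat.coprime_primes (Nat.prime_of_mem_primeFactors hp)
        (Nat.prime_of_mem_primeFactors hq)).2 hpq
    exact hpq.isCoprime.pow
  · exact h p (Nat.prime_of_mem_primeFactors hp)
      (Int.natCast_dvd.2 (Nat.dvd_of_mem_primeFactors hp))

theorem radical_le_rpow_inv {z : ℤ} {n : ℕ} {M : ℝ} (hz : z ≠ 0) (hn : n ≠ 0)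
    (h : ∀ p : ℕ, p.Prime → (p : ℤ) ∣ z → (p : ℤ) ^ n ∣ z) (hM : |(z : ℝ)| ≤ M) :
    ((radical z : ℤ) : ℝ) ≤ M ^ (n : ℝ)⁻¹ := by
  have hle : radical z ^ n ≤ |z| :=
    Int.le_of_dvd (abs_pos.2 hz)
      ((radical_pow_dvd_of_forall_prime_pow_dvd h).trans (self_dvd_abs z))
  have hrad : (0 : ℝ) ≤ (radical z : ℤ) := by exact_mod_cast (radical_pos z).le
  rw [Real.le_rpow_inv_iff_of_pos hrad ((abs_nonneg _).trans hM) (by positivity),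
    Real.rpow_natCast]
  calc ((radical z : ℤ) : ℝ) ^ n ≤ |(z : ℝ)| := by exact_mod_cast hle
    _ ≤ M := hM

theorem radical_mul_mul_le_rpow {a b c : ℤ} {n₀ n₁ n₂ : ℕ} (ha : a ≠ 0) (hb : b ≠ 0) (hc : c ≠ 0)
    (hn₀ : n₀ ≠ 0) (hn₁ : n₁ ≠ 0) (hn₂ : n₂ ≠ 0)
    (hpa : ∀ p : ℕ, p.Prime → (p : ℤ) ∣ a → (p : ℤ) ^ n₀ ∣ a)
    (hpb : ∀ p : ℕ, p.Prime → (p : ℤ) ∣ b → (p : ℤ) ^ n₁ ∣ b)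
    (hpc : ∀ p : ℕ, p.Prime → (p : ℤ) ∣ c → (p : ℤ) ^ n₂ ∣ c) :
    ((radical (a * b * c) : ℤ) : ℝ) ≤
      max |(a : ℝ)| (max |(b : ℝ)| |(c : ℝ)|) ^ ((n₀ : ℝ)⁻¹ + (n₁ : ℝ)⁻¹ + (n₂ : ℝ)⁻¹) := by
  set M := max |(a : ℝ)| (max |(b : ℝ)| |(c : ℝ)|)
  have hM : 0 < M := lt_max_of_lt_left (by positivity)
  have hdvd : radical (a * b * c) ∣ radical a * radical b * radical c :=
    radical_mul_dvd.trans (mul_dvd_mul_right radical_mul_dvd _)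
  have hrad (z : ℤ) : (0 : ℝ) ≤ (radical z : ℤ) := by exact_mod_cast (radical_pos z).le
  have hra := radical_le_rpow_inv (M := M) ha hn₀ hpa (le_max_left _ _)
  have hrb := radical_le_rpow_inv (M := M) hb hn₁ hpb ((le_max_left _ _).trans (le_max_right _ _))
  have hrc := radical_le_rpow_inv (M := M) hc hn₂ hpc ((le_max_right _ _).trans (le_max_right _ _))
  calc ((radical (a * b * c) : ℤ) : ℝ) ≤ ((radical a * radical b * radical c : ℤ) : ℝ) := by
        exact_mod_cast
          Int.le_of_dvd (mul_pos (mul_pos (radical_pos a) (radical_pos b)) (radical_pos c)) hdvd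
    _ ≤ M ^ (n₀ : ℝ)⁻¹ * M ^ (n₁ : ℝ)⁻¹ * M ^ (n₂ : ℝ)⁻¹ := by
        push_cast
        exact mul_le_mul (mul_le_mul hra hrb (hrad b) (by positivity)) hrc (hrad c) (by positivity)
    _ = M ^ ((n₀ : ℝ)⁻¹ + (n₁ : ℝ)⁻¹ + (n₂ : ℝ)⁻¹) := by rw [Real.rpow_add hM, Real.rpow_add hM]

end Int

theorem Real.le_rpow_inv_of_le_mul_rpow {x C t : ℝ} (hx : 0 < x) (ht : t < 1)
    (h : x ≤ C * x ^ t) : x ≤ C ^ (1 - t)⁻¹ := by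
  have hxt : x ^ (1 - t) ≤ C := by
    rwa [Real.rpow_sub hx, Real.rpow_one, div_le_iff₀ (Real.rpow_pos_of_pos hx t)]
  rwa [Real.le_rpow_inv_iff_of_pos hx.le ((Real.rpow_pos_of_pos hx _).le.trans hxt) (by linarith)]

theorem max_abs_le_of_abc {a b c : ℤ} {n₀ n₁ n₂ : ℕ} {C ε : ℝ} (ha : a ≠ 0) (hb : b ≠ 0)
    (hc : c ≠ 0) (hn₀ : n₀ ≠ 0) (hn₁ : n₁ ≠ 0) (hn₂ : n₂ ≠ 0)
    (hpa : ∀ p : ℕ, p.Prime → (p : ℤ) ∣ a → (p : ℤ) ^ n₀ ∣ a)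
    (hpb : ∀ p : ℕ, p.Prime → (p : ℤ) ∣ b → (p : ℤ) ^ n₁ ∣ b)
    (hpc : ∀ p : ℕ, p.Prime → (p : ℤ) ∣ c → (p : ℤ) ^ n₂ ∣ c) (hC : 0 ≤ C) (hε : 0 ≤ ε)
    (hlt : (1 + ε) * ((n₀ : ℝ)⁻¹ + (n₁ : ℝ)⁻¹ + (n₂ : ℝ)⁻¹) < 1)
    (habc : max |(a : ℝ)| (max |(b : ℝ)| |(c : ℝ)|) ≤
      C * (∏ p ∈ (a * b * c).natAbs.primeFactors, (p : ℝ)) ^ (1 + ε)) :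
    max |(a : ℝ)| (max |(b : ℝ)| |(c : ℝ)|) ≤
      C ^ (1 - (1 + ε) * ((n₀ : ℝ)⁻¹ + (n₁ : ℝ)⁻¹ + (n₂ : ℝ)⁻¹))⁻¹ := by
  set M := max |(a : ℝ)| (max |(b : ℝ)| |(c : ℝ)|)
  set s := (n₀ : ℝ)⁻¹ + (n₁ : ℝ)⁻¹ + (n₂ : ℝ)⁻¹
  have hM : 0 < M := lt_max_of_lt_left (by positivity)
  have hrad : ∏ p ∈ (a * b * c).natAbs.primeFactors, (p : ℝ) = ((radical (a * b * c) : ℤ) : ℝ) := by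
    rw [Int.radical_eq_prod_primeFactors]; push_cast; rfl
  refine Real.le_rpow_inv_of_le_mul_rpow hM hlt ?_
  calc M ≤ C * ((radical (a * b * c) : ℤ) : ℝ) ^ (1 + ε) := hrad ▸ habc
    _ ≤ C * (M ^ s) ^ (1 + ε) := by
        gcongr
        · exact_mod_cast (Int.radical_pos _).le
        · exact Int.radical_mul_mul_le_rpow ha hb hc hn₀ hn₁ hn₂ hpa hpb hpc
    _ = C * M ^ ((1 + ε) * s) := by rw [← Real.rpow_mul hM.le, mul_comm s]

/-- Assuming the abc conjecture over ℚ, if `1/n₀ + 1/n₁ + 1/nInf < 1` then there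
are only finitely many pairs of coprime integers `(a, c)` such that (with
`b = c - a`) every prime divides `a`, `b`, `c` to order at least `n₀`, `n₁`,
`nInf` respectively. -/
theorem stmt_1
    (abc : ∀ ε : ℝ, 0 < ε → ∃ C : ℝ, 0 < C ∧ ∀ a b c : ℤ,
      a ≠ 0 → b ≠ 0 → c ≠ 0 → a + b + c = 0 → Int.gcd (Int.gcd a b) c = 1 →
      (max |(a : ℝ)| (max |(b : ℝ)| |(c : ℝ)|)) ≤
        C * (∏ p ∈ (a * b * c).natAbs.primeFactors, (p : ℝ)) ^ (1 + ε))
    (n₀ n₁ nInf : ℕ) (hn₀ : 0 < n₀) (hn₁ : 0 < n₁) (hnInf : 0 < nInf)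
    (hlt : (1 / n₀ + 1 / n₁ + 1 / nInf : ℝ) < 1) :
    {ac : ℤ × ℤ | ac.1 ≠ 0 ∧ ac.2 ≠ 0 ∧ ac.2 - ac.1 ≠ 0 ∧
      Int.gcd ac.1 ac.2 = 1 ∧
      (∀ p : ℕ, p.Prime → (p : ℤ) ∣ ac.1 → (p : ℤ) ^ n₀ ∣ ac.1) ∧
      (∀ p : ℕ, p.Prime → (p : ℤ) ∣ (ac.2 - ac.1) → (p : ℤ) ^ n₁ ∣ (ac.2 - ac.1)) ∧
      (∀ p : ℕ, p.Prime → (p : ℤ) ∣ ac.2 → (p : ℤ) ^ nInf ∣ ac.2)}.Finite := by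
  set s : ℝ := (n₀ : ℝ)⁻¹ + (n₁ : ℝ)⁻¹ + (nInf : ℝ)⁻¹
  have hs : s < 1 := by simpa only [one_div] using hlt
  obtain ⟨ε, hε, hεs⟩ : ∃ ε : ℝ, 0 < ε ∧ (1 + ε) * s < 1 :=
    ⟨(1 - s) / 2, by linarith,
      by nlinarith [mul_pos (sub_pos.2 hs) (by linarith : (0 : ℝ) < 2 - s)]⟩
  obtain ⟨C, hC, habc⟩ := abc ε hε
  set N := ⌈C ^ (1 - (1 + ε) * s)⁻¹⌉
  refine ((Set.finite_Icc (-N) N).prod (Set.finite_Icc (-N) N)).subset ?_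
  rintro ⟨a, c⟩ ⟨ha, hc, hb, hgcd, hpa, hpb, hpc⟩
  have hgcd' : Int.gcd (Int.gcd a (c - a)) (-c) = 1 := by
    rw [Int.gcd_neg]
    exact Int.gcd_gcd_eq_one_of_gcd_eq_one hgcd
  have hpc' : ∀ p : ℕ, p.Prime → (p : ℤ) ∣ -c → (p : ℤ) ^ nInf ∣ -c := by
    simpa only [dvd_neg] using hpc
  have hM := max_abs_le_of_abc ha hb (neg_ne_zero.2 hc) hn₀.ne' hn₁.ne' hnInf.ne' hpa hpb hpc'
    hC.le hε.le hεs (habc a (c - a) (-c) ha hb (neg_ne_zero.2 hc) (by ring) hgcd')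
  have hMa : |a| ≤ N := by exact_mod_cast (le_max_left _ _).trans (hM.trans (Int.le_ceil _))
  have hMc : |((-c : ℤ) : ℝ)| ≤ N :=
    ((le_max_right _ _).trans (le_max_right _ _)).trans (hM.trans (Int.le_ceil _))
  rw [Int.cast_neg, abs_neg] at hMc
  exact ⟨abs_le.1 hMa, abs_le.1 (by exact_mod_cast hMc)⟩
end

section
/- The abc conjecture over ℚ implies asymptotic Fermat: for every ε > 0 there exists N₀ such that for all N ≥ N₀ there are no pairwise coprime positive integers a, b, c with a^N + b^N = c^N. -/
/-!
Apply abc with `ε = 1` to `a^N + b^N = c^N`. The radical of `(abc)^N` is that of `abc`, which is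
at most `abc ≤ c^3`, so `c^N ≤ C · c^6`. Since `c ≥ 2`, this forces `2^(N-6) ≤ C`, which fails
for large `N`.
-/

lemma prod_primeFactors_le_self {n : ℕ} (hn : n ≠ 0) :
    ∏ p ∈ n.primeFactors, (p : ℝ) ≤ n := by
  rw [← Nat.cast_prod]
  exact_mod_cast Nat.le_of_dvd (Nat.pos_of_ne_zero hn) (Nat.prod_primeFactors_dvd n)

lemma pow_sub_le_of_pow_le_mul_pow {x C : ℝ} (hx : 0 < x) {N k : ℕ} (hk : k ≤ N)
    (h : x ^ N ≤ C * x ^ k) : x ^ (N - k) ≤ C := by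
  rw [← Nat.sub_add_cancel hk, pow_add] at h
  exact le_of_mul_le_mul_right h (pow_pos hx k)

namespace Fermat

variable {a b c N : ℕ}

lemma left_le (hN : N ≠ 0) (h : a ^ N + b ^ N = c ^ N) : a ≤ c :=
  (pow_le_pow_iff_left₀ (Nat.zero_le a) (Nat.zero_le c) hN).mp (h ▸ Nat.le_add_right _ _)

lemma two_le_right (ha : 0 < a) (hb : 0 < b) (h : a ^ N + b ^ N = c ^ N) : 2 ≤ c := by
  by_contra! hc
  have hcN : c ^ N ≤ 1 := pow_le_one₀ (Nat.zero_le c) (by omega)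
  have := Nat.one_le_pow N a ha
  have := Nat.one_le_pow N b hb
  omega

lemma prod_primeFactors_le (ha : 0 < a) (hb : 0 < b) (hN : N ≠ 0) (h : a ^ N + b ^ N = c ^ N) :
    ∏ p ∈ (a ^ N * b ^ N * c ^ N).primeFactors, (p : ℝ) ≤ (c : ℝ) ^ 3 := by
  have hac := left_le hN h
  have hbc := left_le hN ((add_comm _ _).trans h)
  have hc : 0 < c := ha.trans_le hac
  rw [← mul_pow, ← mul_pow, Nat.primeFactors_pow _ hN]
  calc ∏ p ∈ (a * b * c).primeFactors, (p : ℝ)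
      ≤ ((a * b * c : ℕ) : ℝ) := prod_primeFactors_le_self (by positivity)
    _ ≤ (c : ℝ) ^ 3 := by
      rw [pow_three, ← mul_assoc]
      push_cast
      gcongr

end Fermat

/-- The abc conjecture over ℚ implies asymptotic Fermat: there is `N₀` such that
for all `N ≥ N₀` there are no pairwise coprime positive integers `a, b, c`
with `a^N + b^N = c^N`. -/
theorem stmt_2
    (abc : ∀ ε : ℝ, 0 < ε → ∃ C : ℝ, 0 < C ∧ ∀ a b c : ℕ,
      0 < a → 0 < b → 0 < c → a + b = c →
      Nat.gcd a b = 1 → Nat.gcd a c = 1 → Nat.gcd b c = 1 →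
      (c : ℝ) ≤ C * (∏ p ∈ (a * b * c).primeFactors, (p : ℝ)) ^ (1 + ε)) :
    ∃ N₀ : ℕ, ∀ N ≥ N₀, ¬ ∃ a b c : ℕ, 0 < a ∧ 0 < b ∧ 0 < c ∧
      Nat.gcd a b = 1 ∧ Nat.gcd a c = 1 ∧ Nat.gcd b c = 1 ∧
      a ^ N + b ^ N = c ^ N := by
  obtain ⟨C, hC, habc⟩ := abc 1 one_pos
  obtain ⟨n, hn⟩ := pow_unbounded_of_one_lt C one_lt_two
  refine ⟨n + 6, fun N hN ⟨a, b, c, ha, hb, hc, hab, hac, hbc, h⟩ => ?_⟩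
  have hN0 : N ≠ 0 := by omega
  have hcN : (c : ℝ) ^ N ≤ C * (c : ℝ) ^ 6 := by
    have habcN := habc (a ^ N) (b ^ N) (c ^ N) (by positivity) (by positivity) (by positivity) h
      (Nat.Coprime.pow N N hab) (Nat.Coprime.pow N N hac) (Nat.Coprime.pow N N hbc)
    rw [one_add_one_eq_two, Real.rpow_two] at habcN
    push_cast at habcN
    calc (c : ℝ) ^ N
        ≤ C * (∏ p ∈ (a ^ N * b ^ N * c ^ N).primeFactors, (p : ℝ)) ^ 2 := habcN
      _ ≤ C * ((c : ℝ) ^ 3) ^ 2 := by gcongr; exact Fermat.prod_primeFactors_le ha hb hN0 h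
      _ = C * (c : ℝ) ^ 6 := by ring
  have hc2 : (2 : ℝ) ≤ c := by exact_mod_cast Fermat.two_le_right ha hb h
  have hcC := pow_sub_le_of_pow_le_mul_pow (by positivity) (by omega) hcN
  have h2c : (2 : ℝ) ^ n ≤ (c : ℝ) ^ (N - 6) :=
    (pow_le_pow_right₀ one_le_two (by omega)).trans (pow_le_pow_left₀ zero_le_two hc2 _)
  linarith
end
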